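/- arXiv:math/0511421 — 6 statements merged into one kernel-verified Lean document; each statement's English description precedes it below -/
import Mathlib

section
/- Let Γ be a full-rank lattice in R^d, A a dilation matrix for Γ, and H a finite nonempty subset of Γ. Then there exists a strictly increasing sequence {Ω_n}_{n≥0} of finite H-admissible subsets of Γ whose union is Γ, with Ω_0 = K_H ∩ Γ and A^{-1}(Ω_{n+1} + H) ∩ Γ ⊆ Ω_n for all n ≥ 0. -/
open Pointwise

/-- A full-rank lattice in `ℝ^d`: the `ℤ`-span (additive closure) of an `ℝ`-basis. -/
def IsLattice {d : ℕ} (Γ : AddSubgroup (Fin d → ℝ)) : Prop :=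
  ∃ B : Module.Basis (Fin d) ℝ (Fin d → ℝ), Γ = AddSubgroup.closure (Set.range ⇑B)

/-- `A` is a dilation matrix for `Γ`. -/
def IsDilation {d : ℕ} (A : Matrix (Fin d) (Fin d) ℝ) (Γ : AddSubgroup (Fin d → ℝ)) : Prop :=
  (∀ x ∈ Γ, A.mulVec x ∈ Γ) ∧ ∀ μ ∈ spectrum ℂ (A.map (Complex.ofReal ·)), 1 < ‖μ‖

/-- `Ω ⊆ Γ` is `H`-admissible: `A⁻¹(Ω + H) ∩ Γ ⊆ Ω`. -/
def Admissible {d : ℕ} (A : Matrix (Fin d) (Fin d) ℝ) (Γ : AddSubgroup (Fin d → ℝ))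
    (H Ω : Set (Fin d → ℝ)) : Prop :=
  ((fun x => A⁻¹.mulVec x) '' (Ω + H)) ∩ (Γ : Set (Fin d → ℝ)) ⊆ Ω

/-!
Let `descend S = A⁻¹(S + H)` and let `coDescend S` be the set of lattice points all of whose
lattice children `A⁻¹(x + h)` lie in `S`. A set `S ⊆ Γ` is admissible iff `S ⊆ coDescend S`, and
the last requirement reads `Ω (n + 1) ⊆ coDescend (Ω n)`. As `A⁻ʲ → 0`, the `j`-th descendants
of `x` lie in `K + A⁻ʲ(x - y)` for any `y ∈ K`: they stay bounded, and eventually every lattice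
descendant lies in `K`, since lattice points close enough to the compact set `K` belong to it.
So `Ω (n + 1) = coDescend (Ω n) ∩ closedBall 0 rₙ` works, with `rₙ ≥ n` large enough to contain
`Ω n` and a point of `coDescend (Ω n) \ Ω n`; such a point exists, for otherwise descent from a
lattice point outside `Ω n` could go on outside `Ω n` forever and never reach `K`.
-/

open Set Function Filter Metric Bornology Matrix
open scoped Topology

section Descend

variable {E : Type*}

def descend [Add E] (g : E → E) (H S : Set E) : Set E :=
  g '' (S + H)

def coDescend [Add E] (g : E → E) (H Γ S : Set E) : Set E :=
  {x ∈ Γ | descend g H {x} ∩ Γ ⊆ S}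

section Add

variable [Add E] {g : E → E} {H Γ S T K : Set E}

theorem descend_mono : Monotone (descend g H) :=
  fun _ _ h => image_mono (add_subset_add_right h)

theorem coDescend_subset : coDescend g H Γ S ⊆ Γ :=
  fun _ hx => hx.1

theorem coDescend_mono : Monotone (coDescend g H Γ) :=
  fun _ _ h _ hx => ⟨hx.1, hx.2.trans h⟩

theorem subset_coDescend_iff : T ⊆ coDescend g H Γ S ↔ T ⊆ Γ ∧ descend g H T ∩ Γ ⊆ S := by
  refine ⟨fun h => ⟨h.trans coDescend_subset, ?_⟩, fun h x hx => ⟨h.1 hx, ?_⟩⟩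
  · rintro _ ⟨⟨_, ⟨x, hx, k, hk, rfl⟩, rfl⟩, hz⟩
    exact (h hx).2 ⟨⟨x + k, add_mem_add rfl hk, rfl⟩, hz⟩
  · exact (inter_subset_inter_left _ (descend_mono (singleton_subset_iff.mpr hx))).trans h.2

theorem descend_iterate_singleton_subset_of_mem {x z : E} (hz : z ∈ descend g H {x}) (j : ℕ) :
    (descend g H)^[j] {z} ⊆ (descend g H)^[j + 1] {x} := by
  rw [iterate_succ_apply]
  exact descend_mono.iterate j (singleton_subset_iff.mpr hz)

theorem descend_iterate_subset_self (hK : descend g H K ⊆ K) (j : ℕ) :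
    (descend g H)^[j] K ⊆ K := by
  induction j with
  | zero => rfl
  | succ j ih => rw [iterate_succ_apply']; exact (descend_mono ih).trans hK

theorem exists_mem_coDescend_notMem
    (hcap : ∀ x, ∃ N, (descend g H)^[N] {x} ∩ Γ ⊆ K) (hKS : K ∩ Γ ⊆ S) (hΓS : (Γ \ S).Nonempty) :
    ∃ x ∈ coDescend g H Γ S, x ∉ S := by
  by_contra! h
  obtain ⟨γ, hγΓ, hγS⟩ := hΓS
  have hescape : ∀ j, ∃ x ∈ (descend g H)^[j] {γ}, x ∈ Γ ∧ x ∉ S := by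
    intro j
    induction j with
    | zero => exact ⟨γ, rfl, hγΓ, hγS⟩
    | succ j ih =>
      obtain ⟨x, hxj, hxΓ, hxS⟩ := ih
      obtain ⟨z, ⟨hz, hzΓ⟩, hzS⟩ := not_subset.mp fun hsub => hxS (h x ⟨hxΓ, hsub⟩)
      refine ⟨z, ?_, hzΓ, hzS⟩
      rw [iterate_succ_apply']
      exact descend_mono (singleton_subset_iff.mpr hxj) hz
  obtain ⟨N, hN⟩ := hcap γ
  obtain ⟨x, hx, hxΓ, hxS⟩ := hescape N
  exact hxS (hKS ⟨hN ⟨hx, hxΓ⟩, hxΓ⟩)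

theorem mem_of_descend_iterate {Ω B : ℕ → Set E} (hΩ : Monotone Ω) (hB : Monotone B)
    (hstep : ∀ n, coDescend g H Γ (Ω n) ∩ B n ⊆ Ω (n + 1)) {m : ℕ} (N : ℕ) {x : E} (hx : x ∈ Γ)
    (hm : ∀ j, (descend g H)^[j] {x} ⊆ B m) (hN : (descend g H)^[N] {x} ∩ Γ ⊆ Ω 0) :
    x ∈ Ω (m + N) := by
  induction N generalizing x with
  | zero => exact hΩ (Nat.zero_le m) (hN ⟨rfl, hx⟩)
  | succ N ih =>
    refine hstep (m + N) ⟨⟨hx, fun z ⟨hz, hzΓ⟩ => ?_⟩, hB (Nat.le_add_right m N) (hm 0 rfl)⟩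
    exact ih hzΓ (fun j => (descend_iterate_singleton_subset_of_mem hz j).trans (hm _))
      ((inter_subset_inter_left _ (descend_iterate_singleton_subset_of_mem hz N)).trans hN)

end Add

section Hom

variable [AddCommMonoid E] (g : E →+ E) {H : Set E}

theorem descend_add_singleton (S : Set E) (v : E) :
    descend g H (S + {v}) = descend g H S + {g v} := by
  rw [descend, descend, add_right_comm, image_add, image_singleton]

theorem descend_iterate_add_singleton (S : Set E) (v : E) (j : ℕ) :
    (descend g H)^[j] (S + {v}) = (descend g H)^[j] S + {g^[j] v} := by
  induction j with
  | zero => rfl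
  | succ j ih => rw [iterate_succ_apply', ih, descend_add_singleton, iterate_succ_apply',
      iterate_succ_apply']

end Hom

theorem descend_iterate_singleton_subset_add [AddCommGroup E] (g : E →+ E) {H K : Set E}
    (hK : descend g H K ⊆ K) {y : E} (hy : y ∈ K) (x : E) (j : ℕ) :
    (descend g H)^[j] {x} ⊆ K + {g^[j] (x - y)} := by
  rw [← add_sub_cancel y x, ← singleton_add_singleton, descend_iterate_add_singleton,
    add_sub_cancel_left]
  exact add_subset_add_right <|
    (descend_mono.iterate j (singleton_subset_iff.mpr hy)).trans (descend_iterate_subset_self hK j)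

end Descend

section Metric

theorem IsCompact.exists_cthickening_inter_subset {X : Type*} [MetricSpace X] {K Γ : Set X}
    (hK : IsCompact K) (hΓ : ∀ s, IsBounded s → (s ∩ Γ).Finite) :
    ∃ ε > 0, cthickening ε K ∩ Γ ⊆ K := by
  set F := (cthickening 1 K ∩ Γ) \ K
  have hF : IsClosed F := ((hΓ _ hK.isBounded.cthickening).sdiff).isClosed
  obtain ⟨δ, hδ, hδF⟩ := hK.exists_cthickening_subset_open hF.isOpen_compl
    fun x hxK hxF => hxF.2 hxK
  refine ⟨min δ 1, by positivity, fun z ⟨hz, hzΓ⟩ => by_contra fun hzK => ?_⟩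
  exact hδF (cthickening_mono (min_le_left δ 1) K hz)
    ⟨⟨cthickening_mono (min_le_right δ 1) K hz, hzΓ⟩, hzK⟩

theorem exists_finite_ssuperset_inter_closedBall {E : Type*} [SeminormedAddCommGroup E]
    {Γ S P : Set E} (hΓ : ∀ s, IsBounded s → (s ∩ Γ).Finite) (hS : IsBounded S) (hSP : S ⊆ P)
    (hPΓ : P ⊆ Γ) {x : E} (hxP : x ∈ P) (hxS : x ∉ S) (r : ℝ) :
    ∃ S', S'.Finite ∧ S ⊂ S' ∧ S' ⊆ P ∧ P ∩ closedBall 0 r ⊆ S' := by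
  obtain ⟨R, hR⟩ :=
    ((isBounded_closedBall (x := 0) (r := r)).union (hS.insert x)).subset_closedBall 0
  have hSS' : S ⊆ P ∩ closedBall 0 R := fun z hz => ⟨hSP hz, hR (.inr (.inr hz))⟩
  exact ⟨P ∩ closedBall 0 R, (hΓ _ isBounded_closedBall).subset fun z hz => ⟨hz.2, hPΓ hz.1⟩,
    (ssubset_iff_of_subset hSS').mpr ⟨x, ⟨hxP, hR (.inr (.inl rfl))⟩, hxS⟩, inter_subset_left,
    fun z hz => ⟨hz.1, hR (.inl hz.2)⟩⟩

variable {E : Type*} [NormedAddCommGroup E] {g : E →+ E} {H Γ K : Set E} {y : E}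

theorem isBounded_iUnion_descend_iterate (hg : ∀ v, Tendsto (fun n => g^[n] v) atTop (𝓝 0))
    (hK : IsBounded K) (hKinv : descend g H K ⊆ K) (hy : y ∈ K) (x : E) :
    IsBounded (⋃ j, (descend g H)^[j] {x}) :=
  (hK.add (isBounded_range_of_tendsto _ (hg (x - y)))).subset <| iUnion_subset fun j =>
    (descend_iterate_singleton_subset_add g hKinv hy x j).trans
      (add_subset_add_left (singleton_subset_iff.mpr (mem_range_self j)))

theorem exists_descend_iterate_inter_subset (hg : ∀ v, Tendsto (fun n => g^[n] v) atTop (𝓝 0))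
    (hΓ : ∀ s, IsBounded s → (s ∩ Γ).Finite) (hK : IsCompact K) (hKinv : descend g H K ⊆ K)
    (hy : y ∈ K) (x : E) : ∃ N, (descend g H)^[N] {x} ∩ Γ ⊆ K := by
  obtain ⟨ε, hε, hεK⟩ := hK.exists_cthickening_inter_subset hΓ
  obtain ⟨N, hN⟩ := ((hg (x - y)).eventually (closedBall_mem_nhds 0 hε)).exists
  refine ⟨N, (inter_subset_inter_left _ ?_).trans hεK⟩
  rintro _ hz
  obtain ⟨k, hk, _, rfl, rfl⟩ := descend_iterate_singleton_subset_add g hKinv hy x N hz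
  exact mem_cthickening_of_dist_le _ k ε K hk (by simpa [dist_eq_norm] using hN)

end Metric

theorem exists_seq_of_forall_exists {α : Type*} {P : α → Prop} {R : ℕ → α → α → Prop} {a : α}
    (ha : P a) (h : ∀ n x, P x → ∃ y, P y ∧ R n x y) :
    ∃ s : ℕ → α, s 0 = a ∧ ∀ n, P (s n) ∧ R n (s n) (s (n + 1)) := by
  choose! f hfP hfR using h
  let s : ℕ → α := fun n => Nat.rec a f n
  have hs : ∀ n, P (s n) := fun n => Nat.rec ha (fun n ih => hfP n _ ih) n
  exact ⟨s, rfl, fun n => ⟨hs n, hfR n _ (hs n)⟩⟩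

theorem exists_descend_exhaustion {E : Type*} [NormedAddCommGroup E] (g : E →+ E)
    (hg : ∀ v, Tendsto (fun n => g^[n] v) atTop (𝓝 0)) {H Γ K : Set E}
    (hΓ : ∀ s, IsBounded s → (s ∩ Γ).Finite) (hΓinf : Γ.Infinite)
    (hK : IsCompact K) (hKne : K.Nonempty) (hKinv : descend g H K ⊆ K) :
    ∃ Ω : ℕ → Set E,
      (∀ n, (Ω n).Finite) ∧ (∀ n, Ω n ⊆ Γ) ∧ (∀ n, descend g H (Ω n) ∩ Γ ⊆ Ω n) ∧
      (∀ n, Ω n ⊂ Ω (n + 1)) ∧ ⋃ n, Ω n = Γ ∧ Ω 0 = K ∩ Γ ∧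
      ∀ n, descend g H (Ω (n + 1)) ∩ Γ ⊆ Ω n := by
  obtain ⟨y, hy⟩ := hKne
  have hcap := exists_descend_iterate_inter_subset hg hΓ hK hKinv hy
  set Good : Set E → Prop := fun S => S.Finite ∧ K ∩ Γ ⊆ S ∧ S ⊆ coDescend g H Γ S
  have hgood₀ : Good (K ∩ Γ) := ⟨hΓ _ hK.isBounded, subset_rfl, subset_coDescend_iff.mpr
    ⟨inter_subset_right, inter_subset_inter_left _ ((descend_mono inter_subset_left).trans hKinv)⟩⟩
  have hnext : ∀ (n : ℕ) S, Good S → ∃ S', Good S' ∧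
      (S ⊂ S' ∧ S' ⊆ coDescend g H Γ S ∧ coDescend g H Γ S ∩ closedBall 0 n ⊆ S') := by
    rintro n S ⟨hSfin, hKS, hSS⟩
    obtain ⟨x, hx, hxS⟩ := exists_mem_coDescend_notMem hcap hKS (hΓinf.sdiff hSfin).nonempty
    obtain ⟨S', hS'fin, hSS', hS'S, hS'n⟩ :=
      exists_finite_ssuperset_inter_closedBall hΓ hSfin.isBounded hSS coDescend_subset hx hxS n
    exact ⟨S', ⟨hS'fin, hKS.trans hSS'.subset, hS'S.trans (coDescend_mono hSS'.subset)⟩,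
      hSS', hS'S, hS'n⟩
  obtain ⟨Ω, hΩ₀, hΩ⟩ := exists_seq_of_forall_exists hgood₀ hnext
  have hmono : Monotone Ω := monotone_nat_of_le_succ fun n => (hΩ n).2.1.subset
  have hΩΓ n : Ω n ⊆ Γ := (hΩ n).1.2.2.trans coDescend_subset
  refine ⟨Ω, fun n => (hΩ n).1.1, hΩΓ, fun n => (subset_coDescend_iff.mp (hΩ n).1.2.2).2,
    fun n => (hΩ n).2.1, (iUnion_subset hΩΓ).antisymm fun x hx => ?_, hΩ₀,
    fun n => (subset_coDescend_iff.mp (hΩ n).2.2.1).2⟩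
  obtain ⟨R, hR⟩ :=
    (isBounded_iUnion_descend_iterate hg hK.isBounded hKinv hy x).subset_closedBall 0
  obtain ⟨N, hN⟩ := hcap x
  refine mem_iUnion.mpr ⟨⌈R⌉₊ + N, mem_of_descend_iterate hmono
    (fun m n h => closedBall_subset_closedBall (Nat.cast_le.mpr h)) (fun n => (hΩ n).2.2.2) N hx
    (fun j => (subset_iUnion _ j).trans (hR.trans (closedBall_subset_closedBall (Nat.le_ceil R))))
    fun z hz => hΩ₀ ▸ ⟨hN hz, hz.2⟩⟩

theorem IsLattice.finite_inter {d : ℕ} {Γ : AddSubgroup (Fin d → ℝ)} (hΓ : IsLattice Γ)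
    {s : Set (Fin d → ℝ)} (hs : IsBounded s) : (s ∩ Γ).Finite := by
  obtain ⟨B, rfl⟩ := hΓ
  rw [← Submodule.span_int_eq_addSubgroupClosure, Submodule.coe_toAddSubgroup]
  exact ZSpan.setFinite_inter B hs

theorem IsLattice.infinite {d : ℕ} (hd : 0 < d) {Γ : AddSubgroup (Fin d → ℝ)} (hΓ : IsLattice Γ) :
    (Γ : Set (Fin d → ℝ)).Infinite := by
  obtain ⟨B, rfl⟩ := hΓ
  refine infinite_of_injective_forall_mem (f := fun k : ℕ => (k : ℝ) • B ⟨0, hd⟩)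
    ((smul_left_injective ℝ (B.ne_zero _)).comp Nat.cast_injective) fun k => ?_
  rw [Nat.cast_smul_eq_nsmul]
  exact AddSubgroup.nsmul_mem _ (AddSubgroup.subset_closure (mem_range_self _)) k

theorem tendsto_pow_nhds_zero_of_spectralRadius_lt_one {A : Type*} [NormedRing A]
    [NormedAlgebra ℂ A] [CompleteSpace A] {a : A} (ha : spectralRadius ℂ a < 1) :
    Tendsto (a ^ ·) atTop (𝓝 0) := by
  obtain ⟨c, hac, hc1⟩ := ENNReal.lt_iff_exists_nnreal_btwn.mp ha
  have hle : ∀ᶠ n : ℕ in atTop, ‖a ^ n‖ ≤ (c : ℝ) ^ n := by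
    have hgelfand := spectrum.pow_nnnorm_pow_one_div_tendsto_nhds_spectralRadius a
    filter_upwards [hgelfand.eventually_lt_const hac, eventually_gt_atTop 0] with n hn hn0
    rw [one_div, ENNReal.rpow_inv_lt_iff (by positivity), ENNReal.rpow_natCast] at hn
    exact_mod_cast hn.le
  refine squeeze_zero_norm' hle (tendsto_pow_atTop_nhds_zero_of_lt_one c.coe_nonneg ?_)
  exact_mod_cast hc1

-- Any norm on `Matrix n n ℂ` will do; Mathlib has no global normed-algebra instance there.
attribute [local instance] Matrix.linftyOpNormedRing Matrix.linftyOpNormedAlgebra in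
theorem Matrix.tendsto_inv_pow_nhds_zero {n : Type*} [Fintype n] [DecidableEq n] [Nonempty n]
    {A : Matrix n n ℝ} (hA : ∀ μ ∈ spectrum ℂ (A.map (Complex.ofReal ·)), 1 < ‖μ‖) :
    Tendsto (A⁻¹ ^ ·) atTop (𝓝 0) := by
  set φ := Complex.ofRealHom.mapMatrix (m := n)
  have hφA : IsUnit (φ A) :=
    (spectrum.zero_notMem_iff ℂ).mp fun h0 => absurd (hA 0 h0) (by simp)
  have hAu : IsUnit A := by
    have hdet : (φ A).det = (A.det : ℂ) := (RingHom.map_det _ _).symm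
    rw [Matrix.isUnit_iff_isUnit_det, isUnit_iff_ne_zero] at hφA ⊢
    rwa [hdet, Complex.ofReal_ne_zero] at hφA
  set u := Units.map (φ : Matrix n n ℝ →* Matrix n n ℂ) hAu.unit
  have hu : ((u⁻¹ : (Matrix n n ℂ)ˣ) : Matrix n n ℂ) = φ A⁻¹ := by
    rw [Units.coe_map_inv, Matrix.coe_units_inv, IsUnit.unit_spec]; rfl
  have hρ : spectralRadius ℂ (φ A⁻¹) < 1 := by
    refine spectrum.spectralRadius_lt_of_forall_lt _ fun μ hμ => ?_
    rw [← hu, ← spectrum.map_inv, Set.mem_inv] at hμ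
    have h := hA _ hμ
    rw [norm_inv, one_lt_inv_iff₀] at h
    rw [← NNReal.coe_lt_coe, coe_nnnorm]
    exact h.2
  have hre : Continuous fun M : Matrix n n ℂ => M.map Complex.re :=
    continuous_id.matrix_map Complex.continuous_re
  have := (hre.tendsto 0).comp (tendsto_pow_nhds_zero_of_spectralRadius_lt_one hρ)
  convert this using 1
  · funext k
    simp only [Function.comp_apply, ← map_pow]
    ext i j; simp [φ]
  · simp

theorem exists_admissible_exhaustion_general (d : ℕ) (hd : 0 < d)
    (Γ : AddSubgroup (Fin d → ℝ))
    (A : Matrix (Fin d) (Fin d) ℝ) (H : Set (Fin d → ℝ))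
    (hΓ : IsLattice Γ) (hA : IsDilation A Γ)
    (K : Set (Fin d → ℝ)) (hKne : K.Nonempty) (hKc : IsCompact K)
    (hKfix : K = (fun x => A⁻¹.mulVec x) '' (K + H)) :
    ∃ Ω : ℕ → Set (Fin d → ℝ),
      (∀ n, (Ω n).Finite) ∧
      (∀ n, Ω n ⊆ (Γ : Set (Fin d → ℝ))) ∧
      (∀ n, Admissible A Γ H (Ω n)) ∧
      (∀ n, Ω n ⊂ Ω (n + 1)) ∧
      (⋃ n, Ω n) = (Γ : Set (Fin d → ℝ)) ∧
      Ω 0 = K ∩ (Γ : Set (Fin d → ℝ)) ∧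
      (∀ n, ((fun x => A⁻¹.mulVec x) '' (Ω (n + 1) + H)) ∩ (Γ : Set (Fin d → ℝ)) ⊆ Ω n) := by
  have : Nonempty (Fin d) := ⟨⟨0, hd⟩⟩
  set g := (toLin' A⁻¹).toAddMonoidHom
  have hg v : Tendsto (fun n => g^[n] v) atTop (𝓝 0) := by
    have hiter n : g^[n] v = (A⁻¹ ^ n) *ᵥ v := by
      change (toLin' A⁻¹)^[n] v = _
      rw [← Module.End.pow_apply, ← toLin'_pow, toLin'_apply]
    have hmulVec : Continuous fun M : Matrix (Fin d) (Fin d) ℝ => M *ᵥ v :=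
      continuous_id.matrix_mulVec continuous_const
    simpa [hiter, Function.comp_def] using (hmulVec.tendsto 0).comp (tendsto_inv_pow_nhds_zero hA.2)
  exact exists_descend_exhaustion g hg (fun _ => hΓ.finite_inter) (hΓ.infinite hd) hKc hKne
    hKfix.superset

/-- there is a strictly increasing exhaustion of `Γ` by finite
`H`-admissible sets, starting from `Ω_0 = K_H ∩ Γ`, with
`A⁻¹(Ω_{n+1} + H) ∩ Γ ⊆ Ω_n` for all `n ≥ 0`. -/
theorem exists_admissible_exhaustion (d : ℕ) (hd : 0 < d)
    (Γ : AddSubgroup (Fin d → ℝ))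
    (A : Matrix (Fin d) (Fin d) ℝ) (H : Set (Fin d → ℝ))
    (hΓ : IsLattice Γ) (hA : IsDilation A Γ) (hH : H.Finite) (hHne : H.Nonempty)
    (hHΓ : H ⊆ Γ)
    (K : Set (Fin d → ℝ)) (hKne : K.Nonempty) (hKc : IsCompact K)
    (hKfix : K = (fun x => A⁻¹.mulVec x) '' (K + H)) :
    ∃ Ω : ℕ → Set (Fin d → ℝ),
      (∀ n, (Ω n).Finite) ∧
      (∀ n, Ω n ⊆ (Γ : Set (Fin d → ℝ))) ∧
      (∀ n, Admissible A Γ H (Ω n)) ∧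
      (∀ n, Ω n ⊂ Ω (n + 1)) ∧
      (⋃ n, Ω n) = (Γ : Set (Fin d → ℝ)) ∧
      Ω 0 = K ∩ (Γ : Set (Fin d → ℝ)) ∧
      (∀ n, ((fun x => A⁻¹.mulVec x) '' (Ω (n + 1) + H)) ∩ (Γ : Set (Fin d → ℝ)) ⊆ Ω n) :=
  exists_admissible_exhaustion_general d hd Γ A H hΓ hA K hKne hKc hKfix
end

section
/- Let Γ be a full-rank lattice in R^d, A a dilation matrix associated with Γ, Λ a finite subset of Γ, and L the Γ×Γ matrix with L_{ij} = c_{Ai−j} when Ai−j ∈ Λ and 0 otherwise, where (c_k)_{k∈Λ} are given complex coefficients. Let Ω ⊆ Γ be a Λ-admissible set. Then for every λ ∈ C, every r ∈ N, and all i ∉ Ω, j ∈ Ω, the entry [(L − λI)^r]_{ij} = 0. Consequently, if Y ∈ ℓ(Γ) (an infinite row vector) satisfies Y(L − λI)^r = 0, then the restriction P_Ω Y of Y to Ω satisfies (P_Ω Y)(T − λI)^r = 0, where T = [c_{Ai−j}]_{i,j∈Ω}. -/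
open scoped BigOperators

/-- Entrywise powers of a (possibly infinite) matrix, defined via finite sums
(`∑ᶠ`); these are well defined pointwise for row/column-finite matrices. -/
noncomputable def matPow {G : Type*} [DecidableEq G] (M : G → G → ℂ) : ℕ → G → G → ℂ
  | 0 => fun i j => if i = j then (1 : ℂ) else 0
  | r + 1 => fun i j => ∑ᶠ k, matPow M r i k * M k j

/-! Admissibility of `Ω` says exactly that `L - λI` has no entries from `Γ \ Ω` into `Ω`, i.e. it is
block triangular. Such matrices form a multiplicatively closed class, and the `Ω`-block of a
product is the product of the `Ω`-blocks, since the finite sums over `Γ` collapse to sums over `Ω`. -/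

lemma finsum_eq_sum_subtype_of_support_subset {α β : Type*} [AddCommMonoid β] {f : α → β}
    {S : Finset α} (hf : Function.support f ⊆ ↑S) : ∑ᶠ k, f k = ∑ k : {x // x ∈ S}, f k := by
  rw [finsum_eq_finsetSum_of_support_subset f hf, Finset.sum_coe_sort S f]

def restrictMat {G : Type*} (M : G → G → ℂ) (S : Finset G) : Matrix S S ℂ :=
  Matrix.of fun a b => M a b

section BlockTriangular

variable {G : Type*} [DecidableEq G] {M : G → G → ℂ} {S : Finset G}

variable (hM : ∀ k ∉ S, ∀ j ∈ S, M k j = 0)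
include hM

lemma matPow_eq_zero_of_notMem_of_mem (r : ℕ) {i j : G} (hi : i ∉ S) (hj : j ∈ S) :
    matPow M r i j = 0 := by
  induction r generalizing j with
  | zero => simp [matPow, show i ≠ j from fun h => hi (h ▸ hj)]
  | succ r ih =>
    refine finsum_eq_zero_of_forall_eq_zero fun k => ?_
    by_cases hk : k ∈ S
    · rw [ih hk, zero_mul]
    · rw [hM k hk j hj, mul_zero]

lemma matPow_apply_eq_restrictMat_pow (r : ℕ) (i j : {x // x ∈ S}) :
    matPow M r i j = (restrictMat M S ^ r) i j := by
  induction r generalizing j with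
  | zero => simp only [matPow, pow_zero, Matrix.one_apply, Subtype.val_inj]
  | succ r ih =>
    have hsupp : Function.support (fun k => matPow M r i k * M k j) ⊆ ↑S := fun k hk => by
      by_contra hkS
      exact hk (by simp only [hM k hkS j j.2, mul_zero])
    simp only [matPow, finsum_eq_sum_subtype_of_support_subset hsupp, pow_succ,
      Matrix.mul_apply, ih, restrictMat, Matrix.of_apply]

lemma vecMul_restrictMat_pow_eq_zero (r : ℕ) {Y : G → ℂ}
    (hY : ∀ j, ∑ᶠ i, Y i * matPow M r i j = 0) :
    Matrix.vecMul (fun i : {x // x ∈ S} => Y i)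
      (restrictMat M S ^ r) = 0 := by
  funext j
  have hsupp : Function.support (fun i => Y i * matPow M r i j) ⊆ ↑S := fun i hi => by
    by_contra hiS
    exact hi (by simp only [matPow_eq_zero_of_notMem_of_mem hM r hiS j.2, mul_zero])
  have hj := hY j
  rw [finsum_eq_sum_subtype_of_support_subset hsupp] at hj
  simpa only [Matrix.vecMul, dotProduct, matPow_apply_eq_restrictMat_pow hM, Pi.zero_apply] using hj

end BlockTriangular

theorem admissible_block_and_restriction_general (d : ℕ) (Γ : AddSubgroup (Fin d → ℝ))
    (A : Matrix (Fin d) (Fin d) ℝ) (Λ : Finset (Fin d → ℝ)) (c : (Fin d → ℝ) → ℂ)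
    (hc : ∀ k, k ∉ Λ → c k = 0)
    (L : ↥Γ → ↥Γ → ℂ)
    (hL : L = fun (i j : ↥Γ) => c (A.mulVec i.1 - j.1))
    (Ω : Finset ↥Γ)
    (hΩ : ∀ i : ↥Γ, (∃ w ∈ Ω, ∃ l ∈ Λ,
        A.mulVec (i : Fin d → ℝ) = ((w : ↥Γ) : Fin d → ℝ) + l) → i ∈ Ω)
    (lam : ℂ) (r : ℕ) :
    (∀ i ∉ Ω, ∀ j ∈ Ω,
        matPow (fun i j => L i j - if i = j then lam else 0) r i j = 0) ∧
    (∀ Y : ↥Γ → ℂ,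
        (∀ j, ∑ᶠ i, Y i * matPow (fun i j => L i j - if i = j then lam else 0) r i j = 0) →
        Matrix.vecMul (fun i : {x // x ∈ Ω} => Y i.1)
          ((Matrix.of (fun i j : {x // x ∈ Ω} =>
              c (A.mulVec ((i.1 : ↥Γ) : Fin d → ℝ) - ((j.1 : ↥Γ) : Fin d → ℝ)))
            - lam • 1) ^ r) = 0) := by
  subst hL
  have hM : ∀ k ∉ Ω, ∀ j ∈ Ω,
      (c (A.mulVec k.1 - j.1) - if k = j then lam else 0) = 0 := fun k hk j hj => by
    have hkj : k ≠ j := fun h => hk (h ▸ hj)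
    have hAk : c (A.mulVec k.1 - j.1) = 0 :=
      hc _ fun hl => hk (hΩ k ⟨j, hj, _, hl, by abel⟩)
    simp [hAk, hkj]
  have hT : Matrix.of (fun i j : {x // x ∈ Ω} =>
        c (A.mulVec ((i.1 : ↥Γ) : Fin d → ℝ) - ((j.1 : ↥Γ) : Fin d → ℝ))) - lam • 1 =
      restrictMat (fun i j => c (A.mulVec i.1 - j.1) - if i = j then lam else 0) Ω := by
    ext i j
    simp [restrictMat, Matrix.one_apply]
  rw [hT]
  exact ⟨fun i hi j hj => matPow_eq_zero_of_notMem_of_mem hM r hi hj,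
    fun Y hY => vecMul_restrictMat_pow_eq_zero hM r hY⟩

/-- for a `Λ`-admissible set `Ω`, the entries `[(L − λI)^r]_{ij}`
vanish for `i ∉ Ω`, `j ∈ Ω`; consequently `Y(L − λI)^r = 0` implies
`(P_Ω Y)(T − λI)^r = 0` where `T = [c_{Ai−j}]_{i,j∈Ω}`. -/
theorem admissible_block_and_restriction (d : ℕ) (Γ : AddSubgroup (Fin d → ℝ))
    (A : Matrix (Fin d) (Fin d) ℝ) (Λ : Finset (Fin d → ℝ)) (c : (Fin d → ℝ) → ℂ)
    (hΓ : IsLattice Γ) (hA : IsDilation A Γ)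
    (hΛ : (Λ : Set (Fin d → ℝ)) ⊆ (Γ : Set (Fin d → ℝ)))
    (hc : ∀ k, k ∉ Λ → c k = 0)
    (L : ↥Γ → ↥Γ → ℂ)
    (hL : L = fun (i j : ↥Γ) => c (A.mulVec i.1 - j.1))
    (Ω : Finset ↥Γ)
    (hΩ : ∀ i : ↥Γ, (∃ w ∈ Ω, ∃ l ∈ Λ,
        A.mulVec (i : Fin d → ℝ) = ((w : ↥Γ) : Fin d → ℝ) + l) → i ∈ Ω)
    (lam : ℂ) (r : ℕ) :
    (∀ i ∉ Ω, ∀ j ∈ Ω,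
        matPow (fun i j => L i j - if i = j then lam else 0) r i j = 0) ∧
    (∀ Y : ↥Γ → ℂ,
        (∀ j, ∑ᶠ i, Y i * matPow (fun i j => L i j - if i = j then lam else 0) r i j = 0) →
        Matrix.vecMul (fun i : {x // x ∈ Ω} => Y i.1)
          ((Matrix.of (fun i j : {x // x ∈ Ω} =>
              c (A.mulVec ((i.1 : ↥Γ) : Fin d → ℝ) - ((j.1 : ↥Γ) : Fin d → ℝ)))
            - lam • 1) ^ r) = 0) :=
  admissible_block_and_restriction_general d Γ A Λ c hc L hL Ω hΩ lam r
end

section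
/- Let Γ, A, Λ, L be as follows: Γ a full-rank lattice in R^d, A a dilation matrix, Λ ⊆ Γ finite, L_{ij} = c_{Ai−j} (zero if Ai−j ∉ Λ). Let {Ω_n}_{n≥0} be a strictly increasing sequence of Λ-admissible subsets of Γ with union Γ and A^{-1}(Ω_{n+1}+Λ)∩Γ ⊆ Ω_n for all n. Then for every r ∈ N, λ ∈ C, k ≥ 0, and indices j ∈ Ω_{k+1}, i ∉ Ω_k: [(L−λI)^r]_{ij} = 0 if i ≠ j, and [(L−λI)^r]_{jj} = (−λ)^r when j ∉ Ω_k. -/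
/-! Outside `Ω k` the columns of `L` indexed by `Ω (k+1)` vanish, because `A m - j ∈ Λ` with
`j ∈ Ω (k+1)` forces `m ∈ Ω k`. So on rows outside `Ω k` and columns in `Ω (k+1)`, `L - λI` acts
like `-λ` times the identity, and this block pattern survives taking powers. -/

open scoped BigOperators

theorem matPow_apply_eq_ite_of_block {G : Type*} [DecidableEq G] (M : G → G → ℂ) {S T : Set G}
    (hST : S ⊆ T) (μ : ℂ) (hM : ∀ j ∈ T, ∀ m ∉ S, M m j = if m = j then μ else 0) (r : ℕ) :
    ∀ j ∈ T, ∀ i ∉ S, matPow M r i j = if i = j then μ ^ r else 0 := by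
  induction r with
  | zero => intro j _ i _; rfl
  | succ r ih =>
    intro j hj i hi
    have hcol : ∀ m, m ≠ j → matPow M r i m * M m j = 0 := by
      intro m hmj
      by_cases hmS : m ∈ S
      · have him : i ≠ m := fun h => hi (h ▸ hmS)
        rw [ih m (hST hmS) i hi, if_neg him, zero_mul]
      · rw [hM j hj m hmS, if_neg hmj, mul_zero]
    change ∑ᶠ m, matPow M r i m * M m j = _
    rw [finsum_eq_single _ j hcol, ih j hj i hi]
    split_ifs with hij
    · subst hij
      rw [hM i hj i hi, if_pos rfl, pow_succ]
    · rw [zero_mul]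

theorem coeff_mulVec_sub_eq_zero_of_notMem {d : ℕ} {Γ : AddSubgroup (Fin d → ℝ)}
    (A : Matrix (Fin d) (Fin d) ℝ) (Λ : Finset (Fin d → ℝ)) {c : (Fin d → ℝ) → ℂ}
    (hc : ∀ k, k ∉ Λ → c k = 0) {S T : Set ↥Γ}
    (hST : ∀ i : ↥Γ, (∃ w ∈ T, ∃ l ∈ Λ, A.mulVec i.1 = w.1 + l) → i ∈ S)
    {m j : ↥Γ} (hj : j ∈ T) (hm : m ∉ S) : c (A.mulVec m.1 - j.1) = 0 := by
  refine hc _ fun hmem => hm (hST m ⟨j, hj, _, hmem, ?_⟩)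
  abel

theorem entries_of_power_outside_general (d : ℕ) (Γ : AddSubgroup (Fin d → ℝ))
    (A : Matrix (Fin d) (Fin d) ℝ) (Λ : Finset (Fin d → ℝ)) (c : (Fin d → ℝ) → ℂ)
    (hc : ∀ k, k ∉ Λ → c k = 0)
    (L : ↥Γ → ↥Γ → ℂ)
    (hL : L = fun (i j : ↥Γ) => c (A.mulVec i.1 - j.1))
    (Ω : ℕ → Set ↥Γ)
    (hmono : ∀ n, Ω n ⊂ Ω (n + 1))
    (hstep : ∀ n, ∀ i : ↥Γ, (∃ w ∈ Ω (n + 1), ∃ l ∈ Λ, A.mulVec i.1 = w.1 + l) → i ∈ Ω n)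
    (lam : ℂ) (r : ℕ) :
    ∀ k : ℕ, ∀ j ∈ Ω (k + 1), ∀ i : ↥Γ, i ∉ Ω k →
      (i ≠ j → matPow (fun i j => L i j - if i = j then lam else 0) r i j = 0) ∧
      (i = j → matPow (fun i j => L i j - if i = j then lam else 0) r i j = (-lam) ^ r) := by
  intro k j hj i hi
  have hblock : ∀ col ∈ Ω (k + 1), ∀ row ∉ Ω k,
      (L row col - if row = col then lam else 0) = if row = col then -lam else 0 := by
    intro col hcol row hrow
    have hL0 : L row col = 0 := hL ▸ coeff_mulVec_sub_eq_zero_of_notMem A Λ hc (hstep k) hcol hrow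
    rw [hL0]
    split_ifs <;> ring
  have hpow := matPow_apply_eq_ite_of_block _ (hmono k).subset (-lam) hblock r j hj i hi
  exact ⟨fun hij => by rw [hpow, if_neg hij], fun hij => by rw [hpow, if_pos hij]⟩

/-- for an admissible exhaustion `{Ω_n}` and `j ∈ Ω_{k+1}`, `i ∉ Ω_k`,
the entries of `(L − λI)^r` satisfy `[(L−λI)^r]_{ij} = 0` if `i ≠ j` and
`[(L−λI)^r]_{jj} = (−λ)^r` when `j ∉ Ω_k`. -/
theorem entries_of_power_outside (d : ℕ) (Γ : AddSubgroup (Fin d → ℝ))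
    (A : Matrix (Fin d) (Fin d) ℝ) (Λ : Finset (Fin d → ℝ)) (c : (Fin d → ℝ) → ℂ)
    (hΓ : IsLattice Γ) (hA : IsDilation A Γ)
    (hΛ : (Λ : Set (Fin d → ℝ)) ⊆ (Γ : Set (Fin d → ℝ)))
    (hc : ∀ k, k ∉ Λ → c k = 0)
    (L : ↥Γ → ↥Γ → ℂ)
    (hL : L = fun (i j : ↥Γ) => c (A.mulVec i.1 - j.1))
    (Ω : ℕ → Set ↥Γ)
    (hadm : ∀ n, ∀ i : ↥Γ, (∃ w ∈ Ω n, ∃ l ∈ Λ, A.mulVec i.1 = w.1 + l) → i ∈ Ω n)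
    (hmono : ∀ n, Ω n ⊂ Ω (n + 1))
    (hunion : (⋃ n, Ω n) = Set.univ)
    (hstep : ∀ n, ∀ i : ↥Γ, (∃ w ∈ Ω (n + 1), ∃ l ∈ Λ, A.mulVec i.1 = w.1 + l) → i ∈ Ω n)
    (lam : ℂ) (r : ℕ) :
    ∀ k : ℕ, ∀ j ∈ Ω (k + 1), ∀ i : ↥Γ, i ∉ Ω k →
      (i ≠ j → matPow (fun i j => L i j - if i = j then lam else 0) r i j = 0) ∧
      (i = j → matPow (fun i j => L i j - if i = j then lam else 0) r i j = (-lam) ^ r) :=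
  entries_of_power_outside_general d Γ A Λ c hc L hL Ω hmono hstep lam r
end

section
/- Under the setup: Γ a full-rank lattice, A a dilation matrix, Λ ⊆ Γ finite, L_{ij} = c_{Ai−j} (zero if Ai−j ∉ Λ), {Ω_n} a strictly increasing exhaustion of Γ by Λ-admissible sets with A^{-1}(Ω_{n+1}+Λ)∩Γ ⊆ Ω_n, T_n = [c_{Ai−j}]_{i,j∈Ω_n}. Let λ ≠ 0, r ∈ N, n ≥ 0, and v a row vector indexed by Ω_n with v(T_n − λI)^r = 0. Then there exists Y ∈ ℓ(Γ) extending v (i.e., Y restricted to Ω_n equals v) with Y(L − λI)^r = 0. -/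
open scoped BigOperators

/-!
Write `M = L - λI`. By admissibility every column of `M` indexed by `Ω_m` is supported in `Ω_m`,
so for `j ∈ Ω_m` the entry `(Y M^r)_j` only depends on `Y` on `Ω_m`. By the step condition, a
new index `j ∈ Ω_{m+1} \ Ω_m` has its column of `M` supported in `Ω_m ∪ {j}` with diagonal
entry `-λ`, hence its column of `M^r` is supported in `Ω_m ∪ {j}` with diagonal entry
`(-λ)^r ≠ 0`. So, starting from `v` on `Ω_n`, each value of `Y` on `Ω_{m+1} \ Ω_m` can be solved
for independently without disturbing the equations already satisfied on `Ω_m`, and the resulting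
compatible sequence of row vectors glues to `Y` on `Γ = ⋃ Ω_m`.
-/

open Set

section RowVectors

variable {G R : Type*}

def IsColumnClosed [Zero R] (P : G → G → R) (S : Set G) : Prop :=
  ∀ k ∈ S, ∀ i, P i k ≠ 0 → i ∈ S

noncomputable def rowMul [Semiring R] (Y : G → R) (P : G → G → R) (j : G) : R :=
  ∑ᶠ i, Y i * P i j

variable [Semiring R] {P : G → G → R}

theorem rowMul_eq_sum {j : G} {s : Finset G} (h : ∀ i, P i j ≠ 0 → i ∈ s) (Y : G → R) :
    rowMul Y P j = ∑ i ∈ s, Y i * P i j :=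
  finsum_eq_finsetSum_of_support_subset _ fun i hi => h i (right_ne_zero_of_mul hi)

theorem IsColumnClosed.rowMul_congr {S : Set G} (hS : IsColumnClosed P S) {j : G} (hj : j ∈ S)
    {Y Y' : G → R} (h : EqOn Y Y' S) : rowMul Y P j = rowMul Y' P j :=
  finsum_congr fun i => by
    by_cases hi : P i j = 0
    · simp [hi]
    · rw [h (hS j hj i hi)]

end RowVectors

section MatPow

variable {G : Type*} [DecidableEq G] {M : G → G → ℂ}

theorem matPow_succ_apply (r : ℕ) (i j : G) : matPow M (r + 1) i j = rowMul (matPow M r i) M j :=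
  rfl

theorem isColumnClosed_matPow {S : Set G} (hS : IsColumnClosed M S) (r : ℕ) :
    IsColumnClosed (matPow M r) S := by
  induction r with
  | zero =>
    intro k hk i h
    by_cases hik : i = k
    · exact hik ▸ hk
    · simp [matPow, hik] at h
  | succ r ih =>
    intro k hk i h
    obtain ⟨l, hl⟩ : ∃ l, matPow M r i l * M l k ≠ 0 := by
      by_contra! hzero
      exact h (finsum_eq_zero_of_forall_eq_zero hzero)
    exact ih l (hS k hk l (right_ne_zero_of_mul hl)) i (left_ne_zero_of_mul hl)

theorem matPow_apply_self {S : Set G} {j : G} {μ : ℂ} (hS : IsColumnClosed M S)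
    (hjS : IsColumnClosed M (insert j S)) (hj : j ∉ S) (hjj : M j j = μ) (r : ℕ) :
    matPow M r j j = μ ^ r := by
  induction r with
  | zero => simp [matPow]
  | succ r ih =>
    rw [matPow_succ_apply, rowMul, finsum_eq_single _ j, ih, hjj, pow_succ]
    intro k hkj
    by_cases hkj' : M k j = 0
    · simp [hkj']
    · have hk : k ∈ S := (hjS j (mem_insert j S) k hkj').resolve_left hkj
      have hjk : matPow M r j k = 0 := by
        by_contra h
        exact hj ((isColumnClosed_matPow hS r) k hk j h)
      simp [hjk]

theorem IsColumnClosed.matPow_eq_pow {s : Finset G} (hs : IsColumnClosed M s) (r : ℕ)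
    (i j : s) : matPow M r i j = ((Matrix.of fun a b : s => M a b) ^ r) i j := by
  induction r generalizing j with
  | zero => by_cases h : i = j <;> simp [matPow, h]
  | succ r ih =>
    rw [matPow_succ_apply, rowMul_eq_sum (hs j j.2), pow_succ, Matrix.mul_apply,
      ← Finset.sum_coe_sort s]
    exact Finset.sum_congr rfl fun k _ => by rw [ih k]; rfl

theorem IsColumnClosed.rowMul_matPow {s : Finset G} (hs : IsColumnClosed M s) (Y : G → ℂ)
    (r : ℕ) {j : G} (hj : j ∈ s) :
    rowMul Y (matPow M r) j =
      Matrix.vecMul (fun i : s => Y i) ((Matrix.of fun a b : s => M a b) ^ r) ⟨j, hj⟩ := by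
  rw [rowMul_eq_sum (isColumnClosed_matPow hs r j hj), ← Finset.sum_coe_sort s]
  simp only [Matrix.vecMul, dotProduct, hs.matPow_eq_pow r _ ⟨j, hj⟩]

theorem IsColumnClosed.rowMul_matPow_sub_diag {L : G → G → ℂ} {lam : ℂ} {s : Finset G}
    (hs : IsColumnClosed (fun i k => L i k - if i = k then lam else 0) s) (Y : G → ℂ) (r : ℕ)
    {j : G} (hj : j ∈ s) :
    rowMul Y (matPow (fun i k => L i k - if i = k then lam else 0) r) j =
      Matrix.vecMul (fun i : s => Y i)
        ((Matrix.of (fun a b : s => L a b) - lam • 1) ^ r) ⟨j, hj⟩ := by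
  rw [hs.rowMul_matPow Y r hj]
  congr
  ext a b
  simp [Matrix.one_apply]

end MatPow

theorem exists_eqOn_of_eqOn_succ {α β : Type*} {f : ℕ → α → β} {s : ℕ → Set α}
    (hs : Monotone s) (hcover : ∀ a, ∃ k, a ∈ s k) (hf : ∀ k, EqOn (f (k + 1)) (f k) (s k)) :
    ∃ g : α → β, ∀ k, EqOn g (f k) (s k) := by
  have hstable : ∀ {k k'}, k ≤ k' → EqOn (f k') (f k) (s k) := by
    intro k k' hkk'
    induction hkk' with
    | refl => exact eqOn_refl _ _
    | step hle ih => exact ((hf _).mono (hs hle)).trans ih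
  classical
  exact ⟨fun a => f (Nat.find (hcover a)) a, fun k a ha =>
    (hstable (Nat.find_min' _ ha) (Nat.find_spec (hcover a))).symm⟩

section Extension

variable {G K : Type*} [DecidableEq G] [Field K] {P : G → G → K}

/-- Outside `s`, the value at `j` is the one that makes `(Y P)_j` vanish once the column `j`
of `P` is supported in `insert j s`. -/
def extendRow (P : G → G → K) (s : Finset G) (Y : G → K) (j : G) : K :=
  if j ∈ s then Y j else -(P j j)⁻¹ * ∑ i ∈ s, Y i * P i j

theorem extendRow_eqOn (s : Finset G) (Y : G → K) : EqOn (extendRow P s Y) Y s :=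
  fun _ hj => if_pos hj

theorem rowMul_extendRow_of_mem {s : Finset G} (hs : IsColumnClosed P s) (Y : G → K) {j : G}
    (hj : j ∈ s) : rowMul (extendRow P s Y) P j = rowMul Y P j :=
  hs.rowMul_congr hj (extendRow_eqOn s Y)

theorem rowMul_extendRow_of_notMem {s : Finset G} {j : G} (hj : j ∉ s)
    (hjs : IsColumnClosed P (insert j (s : Set G))) (hjj : P j j ≠ 0) (Y : G → K) :
    rowMul (extendRow P s Y) P j = 0 := by
  have hcol : ∀ i, P i j ≠ 0 → i ∈ insert j s := fun i h => by
    simpa using hjs j (mem_insert j _) i h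
  rw [rowMul_eq_sum hcol, Finset.sum_insert hj,
    Finset.sum_congr rfl fun i hi => by rw [extendRow_eqOn s Y hi]]
  simp only [extendRow, if_neg hj]
  field_simp
  ring

def extendRowSeq (P : G → G → K) (s : ℕ → Finset G) (Y₀ : G → K) : ℕ → G → K
  | 0 => Y₀
  | k + 1 => extendRow P (s k) (extendRowSeq P s Y₀ k)

variable {s : ℕ → Finset G} {Y₀ : G → K}

theorem rowMul_extendRowSeq (hclosed : ∀ k, IsColumnClosed P (s k))
    (hnew : ∀ k, ∀ j ∈ s (k + 1), j ∉ s k →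
      IsColumnClosed P (insert j (s k : Set G)) ∧ P j j ≠ 0)
    (hY₀ : ∀ j ∈ s 0, rowMul Y₀ P j = 0) (k : ℕ) :
    ∀ j ∈ s k, rowMul (extendRowSeq P s Y₀ k) P j = 0 := by
  induction k with
  | zero => exact hY₀
  | succ k ih =>
    intro j hj
    by_cases hjk : j ∈ s k
    · rw [extendRowSeq, rowMul_extendRow_of_mem (hclosed k) _ hjk, ih j hjk]
    · exact rowMul_extendRow_of_notMem hjk (hnew k j hj hjk).1 (hnew k j hj hjk).2 _

theorem exists_extension_rowMul_eq_zero (hs : Monotone s) (hcover : ∀ j, ∃ k, j ∈ s k)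
    (hclosed : ∀ k, IsColumnClosed P (s k))
    (hnew : ∀ k, ∀ j ∈ s (k + 1), j ∉ s k →
      IsColumnClosed P (insert j (s k : Set G)) ∧ P j j ≠ 0)
    (hY₀ : ∀ j ∈ s 0, rowMul Y₀ P j = 0) :
    ∃ Y : G → K, EqOn Y Y₀ (s 0) ∧ ∀ j, rowMul Y P j = 0 := by
  obtain ⟨Y, hY⟩ := exists_eqOn_of_eqOn_succ (f := extendRowSeq P s Y₀)
    (s := fun k => (s k : Set G)) (fun _ _ h => Finset.coe_subset.2 (hs h)) hcover
    (fun k => extendRow_eqOn (s k) _)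
  refine ⟨Y, hY 0, fun j => ?_⟩
  obtain ⟨k, hk⟩ := hcover j
  rw [(hclosed k).rowMul_congr hk (hY k)]
  exact rowMul_extendRowSeq hclosed hnew hY₀ k j hk

end Extension

theorem exists_mem_eq_add_of_apply_sub_ne_zero {E R : Type*} [AddCommGroup E] [Zero R]
    {Λ : Finset E} {c : E → R} (hc : ∀ k, k ∉ Λ → c k = 0) {x y : E} (h : c (x - y) ≠ 0) :
    ∃ l ∈ Λ, x = y + l :=
  ⟨x - y, by_contra fun hl => h (hc _ hl), (add_sub_cancel y x).symm⟩

section Refinement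

variable {d : ℕ} {Γ : AddSubgroup (Fin d → ℝ)} {A : Matrix (Fin d) (Fin d) ℝ}
  {Λ : Finset (Fin d → ℝ)} {L : Γ → Γ → ℂ} {Ω Ω' : Finset Γ}

/-- The set `A⁻¹(Ω + Λ) ∩ Γ`. -/
def dilationPreimage (A : Matrix (Fin d) (Fin d) ℝ) (Λ : Finset (Fin d → ℝ)) (Ω : Finset Γ) :
    Set Γ :=
  {i | ∃ w ∈ Ω, ∃ l ∈ Λ, A.mulVec i.1 = w.1 + l}

theorem isColumnClosed_sub_diag (hL : ∀ i k, L i k ≠ 0 → ∃ l ∈ Λ, A.mulVec i.1 = k.1 + l)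
    (hΩ : dilationPreimage A Λ Ω ⊆ Ω) (lam : ℂ) :
    IsColumnClosed (fun i k => L i k - if i = k then lam else 0) Ω := by
  intro k hk i h
  by_cases hik : i = k
  · exact hik ▸ hk
  · obtain ⟨l, hl, hi⟩ := hL i k (by simpa [hik] using h)
    exact hΩ ⟨k, hk, l, hl, hi⟩

theorem isColumnClosed_insert_sub_diag
    (hL : ∀ i k, L i k ≠ 0 → ∃ l ∈ Λ, A.mulVec i.1 = k.1 + l) {lam : ℂ}
    (hΩ : IsColumnClosed (fun i k => L i k - if i = k then lam else 0) Ω)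
    (hstep : dilationPreimage A Λ Ω' ⊆ Ω) {j : Γ} (hj : j ∈ Ω') :
    IsColumnClosed (fun i k => L i k - if i = k then lam else 0) (insert j (Ω : Set Γ)) := by
  rintro k (rfl | hk) i h
  · by_cases hik : i = k
    · exact Or.inl hik
    · obtain ⟨l, hl, hi⟩ := hL i k (by simpa [hik] using h)
      exact Or.inr (hstep ⟨k, hj, l, hl, hi⟩)
  · exact Or.inr (hΩ k hk i h)

theorem matPow_sub_diag_apply_self_of_notMem
    (hL : ∀ i k, L i k ≠ 0 → ∃ l ∈ Λ, A.mulVec i.1 = k.1 + l) {lam : ℂ}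
    (hΩ : dilationPreimage A Λ Ω ⊆ Ω) (hstep : dilationPreimage A Λ Ω' ⊆ Ω) {j : Γ}
    (hj : j ∈ Ω') (hjΩ : j ∉ Ω) (r : ℕ) :
    matPow (fun i k => L i k - if i = k then lam else 0) r j j = (-lam) ^ r := by
  have hLjj : L j j = 0 := by
    by_contra h
    obtain ⟨l, hl, hjl⟩ := hL j j h
    exact hjΩ (hstep ⟨j, hj, l, hl, hjl⟩)
  have hclosed := isColumnClosed_sub_diag hL hΩ lam
  exact matPow_apply_self hclosed (isColumnClosed_insert_sub_diag hL hclosed hstep hj) hjΩ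
    (by simp [hLjj]) r

end Refinement

theorem extension_of_kernel_vector_general (d : ℕ) (Γ : AddSubgroup (Fin d → ℝ))
    (A : Matrix (Fin d) (Fin d) ℝ) (Λ : Finset (Fin d → ℝ)) (c : (Fin d → ℝ) → ℂ)
    (hc : ∀ k, k ∉ Λ → c k = 0)
    (L : ↥Γ → ↥Γ → ℂ)
    (hL : L = fun (i j : ↥Γ) => c (A.mulVec i.1 - j.1))
    (Ω : ℕ → Finset ↥Γ)
    (hadm : ∀ n, ∀ i : ↥Γ, (∃ w ∈ Ω n, ∃ l ∈ Λ, A.mulVec i.1 = w.1 + l) → i ∈ Ω n)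
    (hmono : ∀ n, Ω n ⊂ Ω (n + 1))
    (hunion : (⋃ n, (Ω n : Set ↥Γ)) = Set.univ)
    (hstep : ∀ n, ∀ i : ↥Γ, (∃ w ∈ Ω (n + 1), ∃ l ∈ Λ, A.mulVec i.1 = w.1 + l) → i ∈ Ω n)
    (lam : ℂ) (hlam : lam ≠ 0) (r : ℕ) (n : ℕ)
    (v : {x // x ∈ Ω n} → ℂ)
    (hv : Matrix.vecMul v
        ((Matrix.of (fun i j : {x // x ∈ Ω n} => c (A.mulVec i.1.1 - j.1.1))
          - lam • 1) ^ r) = 0) :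
    ∃ Y : ↥Γ → ℂ,
      (∀ i : {x // x ∈ Ω n}, Y i.1 = v i) ∧
      (∀ j, ∑ᶠ i, Y i * matPow (fun i j => L i j - if i = j then lam else 0) r i j = 0) := by
  set M : Γ → Γ → ℂ := fun i k => L i k - if i = k then lam else 0
  have hLsupp : ∀ i k, L i k ≠ 0 → ∃ l ∈ Λ, A.mulVec i.1 = k.1 + l := fun i k h =>
    exists_mem_eq_add_of_apply_sub_ne_zero hc (by rwa [hL] at h)
  have hclosed : ∀ m, IsColumnClosed M (Ω m) := fun m => isColumnClosed_sub_diag hLsupp (hadm m) lam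
  have hΩ : Monotone Ω := monotone_nat_of_le_succ fun m => (hmono m).subset
  let Y₀ : Γ → ℂ := fun j => if h : j ∈ Ω n then v ⟨j, h⟩ else 0
  have hY₀v : (fun i : Ω n => Y₀ i) = v := funext fun i => dif_pos i.2
  have hY₀ : ∀ j ∈ Ω n, rowMul Y₀ (matPow M r) j = 0 := fun j hj => by
    rw [(hclosed n).rowMul_matPow_sub_diag Y₀ r hj, hY₀v, hL]
    exact congrFun hv _
  have hnew : ∀ m, ∀ j ∈ Ω (m + 1), j ∉ Ω m →
      IsColumnClosed (matPow M r) (insert j (Ω m : Set Γ)) ∧ matPow M r j j ≠ 0 :=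
    fun m j hj hjm => by
      rw [matPow_sub_diag_apply_self_of_notMem hLsupp (hadm m) (hstep m) hj hjm]
      exact ⟨isColumnClosed_matPow
        (isColumnClosed_insert_sub_diag hLsupp (hclosed m) (hstep m) hj) r,
        pow_ne_zero r (neg_ne_zero.2 hlam)⟩
  have hcover : ∀ j, ∃ k, j ∈ Ω (n + k) := fun j => by
    obtain ⟨m, hm⟩ := mem_iUnion.1 (hunion ▸ mem_univ j)
    exact ⟨m, hΩ (by omega) hm⟩
  obtain ⟨Y, hYv, hY⟩ := exists_extension_rowMul_eq_zero (s := fun k => Ω (n + k))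
    (fun _ _ h => hΩ (by omega)) hcover (fun k => isColumnClosed_matPow (hclosed _) r)
    (fun k => hnew (n + k)) hY₀
  exact ⟨Y, fun i => (hYv i.2).trans (dif_pos i.2), hY⟩

/-- a row vector `v` on `Ω_n` with `v(T_n − λI)^r = 0`, `λ ≠ 0`,
extends to an infinite row vector `Y ∈ ℓ(Γ)` with `Y(L − λI)^r = 0`. -/
theorem extension_of_kernel_vector (d : ℕ) (Γ : AddSubgroup (Fin d → ℝ))
    (A : Matrix (Fin d) (Fin d) ℝ) (Λ : Finset (Fin d → ℝ)) (c : (Fin d → ℝ) → ℂ)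
    (hΓ : IsLattice Γ) (hA : IsDilation A Γ)
    (hΛ : (Λ : Set (Fin d → ℝ)) ⊆ (Γ : Set (Fin d → ℝ)))
    (hc : ∀ k, k ∉ Λ → c k = 0)
    (L : ↥Γ → ↥Γ → ℂ)
    (hL : L = fun (i j : ↥Γ) => c (A.mulVec i.1 - j.1))
    (Ω : ℕ → Finset ↥Γ)
    (hadm : ∀ n, ∀ i : ↥Γ, (∃ w ∈ Ω n, ∃ l ∈ Λ, A.mulVec i.1 = w.1 + l) → i ∈ Ω n)
    (hmono : ∀ n, Ω n ⊂ Ω (n + 1))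
    (hunion : (⋃ n, (Ω n : Set ↥Γ)) = Set.univ)
    (hstep : ∀ n, ∀ i : ↥Γ, (∃ w ∈ Ω (n + 1), ∃ l ∈ Λ, A.mulVec i.1 = w.1 + l) → i ∈ Ω n)
    (lam : ℂ) (hlam : lam ≠ 0) (r : ℕ) (n : ℕ)
    (v : {x // x ∈ Ω n} → ℂ)
    (hv : Matrix.vecMul v
        ((Matrix.of (fun i j : {x // x ∈ Ω n} => c (A.mulVec i.1.1 - j.1.1))
          - lam • 1) ^ r) = 0) :
    ∃ Y : ↥Γ → ℂ,
      (∀ i : {x // x ∈ Ω n}, Y i.1 = v i) ∧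
      (∀ j, ∑ᶠ i, Y i * matPow (fun i j => L i j - if i = j then lam else 0) r i j = 0) :=
  extension_of_kernel_vector_general d Γ A Λ c hc L hL Ω hadm hmono hunion hstep lam hlam r n v hv
end

section
/- Under the same setup (L the infinite matrix of a refinement equation over a lattice Γ with Λ-admissible exhaustion {Ω_n}): if λ ≠ 0, Y ∈ ℓ(Γ), Y ≠ 0, and Y(L − λI)^r = 0 for some r ∈ N, then the restriction of Y to Ω_n is nonzero for every n ≥ 0. In particular, any extension of a vector v ∈ ker(T_n − λI)^r to an element of ker(L − λI)^r is unique. -/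
/-!
Write `B = L - λI`. Column `j ∈ Ω (m + 1)` of `L` is supported on `{i | A i ∈ j + Λ} ⊆ Ω m`, so
off the diagonal column `j` of `B` lives in `Ω m`, while for `j ∉ Ω m` its diagonal entry is
`-λ ≠ 0`. Hence if `Z B = 0` and `Z` vanishes on `Ω m`, then `Z j * B j j = 0` forces `Z` to
vanish on `Ω (m + 1)`, and exhausting `Γ` gives `Z = 0`. Applying this successively to
`Z = Y B^(r-1), …, Y B^0` (each vanishes on `Ω n`, which is invariant under the column supports
of `B`) gives `Y = 0`. Invertibility of `A` makes the columns of `B` finitely supported, which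
is what makes the `∑ᶠ` products associative.
-/

open scoped BigOperators

theorem finsum_sub_mul {G : Type*} {P : G → ℂ} (hP : {i | P i ≠ 0}.Finite) (Y₁ Y₂ : G → ℂ) :
    ∑ᶠ i, (Y₁ - Y₂) i * P i = ∑ᶠ i, Y₁ i * P i - ∑ᶠ i, Y₂ i * P i := by
  simp_rw [Pi.sub_apply, sub_mul]
  exact finsum_sub_distrib (hP.subset (Function.support_mul_subset_right _ _))
    (hP.subset (Function.support_mul_subset_right _ _))

section MatPow

variable {G : Type*} [DecidableEq G]

theorem exists_ne_zero_of_matPow_succ_ne_zero {M : G → G → ℂ} {r : ℕ} {i j : G}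
    (h : matPow M (r + 1) i j ≠ 0) : ∃ k, matPow M r i k ≠ 0 ∧ M k j ≠ 0 := by
  contrapose! h
  refine finsum_eq_zero_of_forall_eq_zero fun k => ?_
  by_cases hk : matPow M r i k = 0
  · rw [hk, zero_mul]
  · rw [h k hk, mul_zero]

theorem matPow_column_finite {M : G → G → ℂ} (hM : ∀ j, {i | M i j ≠ 0}.Finite) (r : ℕ) (j : G) :
    {i | matPow M r i j ≠ 0}.Finite := by
  induction r generalizing j with
  | zero =>
    refine (Set.finite_singleton j).subset fun i hi => ?_
    by_contra hij
    simp_all [matPow]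
  | succ r ih =>
    refine ((hM j).biUnion fun k _ => ih k).subset fun i hi => ?_
    obtain ⟨k, hik, hkj⟩ := exists_ne_zero_of_matPow_succ_ne_zero hi
    exact Set.mem_biUnion hkj hik

theorem matPow_mem_of_ne_zero {M : G → G → ℂ} {S : Set G}
    (hS : ∀ j ∈ S, ∀ i, M i j ≠ 0 → i ∈ S) (r : ℕ) {i j : G} (hj : j ∈ S)
    (h : matPow M r i j ≠ 0) : i ∈ S := by
  induction r generalizing i j with
  | zero =>
    by_cases hij : i = j
    · exact hij ▸ hj
    · simp [matPow, hij] at h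
  | succ r ih =>
    obtain ⟨k, hik, hkj⟩ := exists_ne_zero_of_matPow_succ_ne_zero h
    exact ih (hS j hj k hkj) hik

theorem finsum_mul_matPow_zero (M : G → G → ℂ) (Y : G → ℂ) (j : G) :
    ∑ᶠ i, Y i * matPow M 0 i j = Y j := by
  rw [finsum_eq_single _ j fun i hij => by simp [matPow, hij]]
  simp [matPow]

theorem finsum_mul_matPow_succ {M : G → G → ℂ} (hM : ∀ j, {i | M i j ≠ 0}.Finite)
    (Y : G → ℂ) (r : ℕ) (j : G) :
    ∑ᶠ i, Y i * matPow M (r + 1) i j = ∑ᶠ k, (∑ᶠ i, Y i * matPow M r i k) * M k j := by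
  have hT : ∀ f : G → ℂ, Function.support (fun k => f k * M k j) ⊆ (hM j).toFinset :=
    fun f k hk => (hM j).mem_toFinset.2 (right_ne_zero_of_mul hk)
  have hpow : ∀ i, matPow M (r + 1) i j = ∑ k ∈ (hM j).toFinset, matPow M r i k * M k j :=
    fun i => finsum_eq_sum_of_support_subset _ (hT _)
  simp_rw [hpow, Finset.mul_sum, finsum_eq_sum_of_support_subset _ (hT _), ← mul_assoc]
  rw [finsum_sum_comm]
  · simp_rw [finsum_mul]
  · exact fun k _ => (matPow_column_finite hM r k).subset fun i hi =>
      right_ne_zero_of_mul (left_ne_zero_of_mul hi)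

end MatPow

section Filtration

variable {G : Type*} {B : G → G → ℂ} {Ω : ℕ → Set G}

theorem mem_of_ne_zero_of_mem (hΩ : Monotone Ω)
    (hoff : ∀ m, ∀ j ∈ Ω (m + 1), ∀ k ≠ j, B k j ≠ 0 → k ∈ Ω m)
    {n : ℕ} {i j : G} (hj : j ∈ Ω n) (h : B i j ≠ 0) : i ∈ Ω n := by
  by_cases hij : i = j
  · exact hij ▸ hj
  · exact hoff n j (hΩ n.le_succ hj) i hij h

theorem eq_zero_of_vecMul_eq_zero (hΩ : Monotone Ω) (hunion : ⋃ n, Ω n = Set.univ)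
    (hoff : ∀ m, ∀ j ∈ Ω (m + 1), ∀ k ≠ j, B k j ≠ 0 → k ∈ Ω m)
    (hdiag : ∀ m, ∀ j ∈ Ω (m + 1), j ∉ Ω m → B j j ≠ 0)
    {Z : G → ℂ} (hZ : ∀ j, ∑ᶠ k, Z k * B k j = 0) {n : ℕ} (hvan : ∀ i ∈ Ω n, Z i = 0) :
    Z = 0 := by
  have hvan_of_le : ∀ m, n ≤ m → ∀ i ∈ Ω m, Z i = 0 := by
    intro m hm
    induction m, hm using Nat.le_induction with
    | base => exact hvan
    | succ m _ ih =>
      intro j hj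
      have hsum : ∑ᶠ k, Z k * B k j = Z j * B j j := finsum_eq_single _ j fun k hkj => by
        by_cases hkj' : B k j = 0
        · rw [hkj', mul_zero]
        · rw [ih k (hoff m j hj k hkj hkj'), zero_mul]
      by_cases hjm : j ∈ Ω m
      · exact ih j hjm
      · exact (mul_eq_zero.1 ((hZ j).symm.trans hsum).symm).resolve_right (hdiag m j hj hjm)
  funext i
  obtain ⟨m, hm⟩ := Set.mem_iUnion.1 (hunion.symm ▸ Set.mem_univ i)
  exact hvan_of_le (max n m) (le_max_left n m) i (hΩ (le_max_right n m) hm)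

theorem eq_zero_of_vecMul_matPow_eq_zero [DecidableEq G] (hB : ∀ j, {i | B i j ≠ 0}.Finite)
    (hΩ : Monotone Ω) (hunion : ⋃ n, Ω n = Set.univ)
    (hoff : ∀ m, ∀ j ∈ Ω (m + 1), ∀ k ≠ j, B k j ≠ 0 → k ∈ Ω m)
    (hdiag : ∀ m, ∀ j ∈ Ω (m + 1), j ∉ Ω m → B j j ≠ 0)
    {r : ℕ} {Y : G → ℂ} (hY : ∀ j, ∑ᶠ i, Y i * matPow B r i j = 0) {n : ℕ}
    (hvan : ∀ i ∈ Ω n, Y i = 0) : Y = 0 := by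
  induction r with
  | zero => exact funext fun j => (finsum_mul_matPow_zero B Y j).symm.trans (hY j)
  | succ r ih =>
    set W : G → ℂ := fun k => ∑ᶠ i, Y i * matPow B r i k
    have hW : ∀ j, ∑ᶠ k, W k * B k j = 0 := fun j => by
      rw [← finsum_mul_matPow_succ hB]
      exact hY j
    have hWvan : ∀ k ∈ Ω n, W k = 0 := fun k hk => finsum_eq_zero_of_forall_eq_zero fun i => by
      by_cases hik : matPow B r i k = 0
      · rw [hik, mul_zero]
      · rw [hvan i (matPow_mem_of_ne_zero (fun j hj i => mem_of_ne_zero_of_mem hΩ hoff hj)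
          r hk hik), zero_mul]
    exact ih fun j => congrFun (eq_zero_of_vecMul_eq_zero hΩ hunion hoff hdiag hW hWvan) j

end Filtration

theorem IsDilation.isUnit {d : ℕ} {A : Matrix (Fin d) (Fin d) ℝ} {Γ : AddSubgroup (Fin d → ℝ)}
    (hA : IsDilation A Γ) : IsUnit A := by
  have hAℂ : IsUnit (A.map (Complex.ofReal ·)) := by
    by_contra h
    exact absurd (hA.2 0 ((spectrum.zero_mem_iff ℂ).2 h)) (by simp)
  rw [Matrix.isUnit_iff_isUnit_det, isUnit_iff_ne_zero] at hAℂ ⊢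
  rw [show A.map (Complex.ofReal ·) = Complex.ofRealHom.mapMatrix A from rfl,
    ← RingHom.map_det] at hAℂ
  exact fun h => hAℂ (by simp [h])

section Refinement

variable {d : ℕ} {Γ : AddSubgroup (Fin d → ℝ)} {A : Matrix (Fin d) (Fin d) ℝ}
  {Λ : Finset (Fin d → ℝ)} {c : (Fin d → ℝ) → ℂ}

theorem exists_mem_eq_add_of_ne_zero (hc : ∀ k, k ∉ Λ → c k = 0) {i j : Γ}
    (h : c (A.mulVec i.1 - j.1) ≠ 0) : ∃ l ∈ Λ, A.mulVec i.1 = j.1 + l :=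
  ⟨_, by_contra (h ∘ hc _), (add_sub_cancel j.1 _).symm⟩

theorem refinement_column_finite (hA : IsUnit A) (hc : ∀ k, k ∉ Λ → c k = 0) (j : Γ) :
    {i : Γ | c (A.mulVec i.1 - j.1) ≠ 0}.Finite := by
  have hinj : Function.Injective fun i : Γ => A.mulVec i.1 :=
    (Matrix.mulVec_injective_iff_isUnit.2 hA).comp Subtype.val_injective
  refine ((Λ.finite_toSet.image (j.1 + ·)).preimage hinj.injOn).subset fun i hi => ?_
  obtain ⟨l, hl, hil⟩ := exists_mem_eq_add_of_ne_zero hc hi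
  exact ⟨l, hl, hil.symm⟩

end Refinement

theorem restriction_nonzero_and_unique_extension_general (d : ℕ) (Γ : AddSubgroup (Fin d → ℝ))
    (A : Matrix (Fin d) (Fin d) ℝ) (Λ : Finset (Fin d → ℝ)) (c : (Fin d → ℝ) → ℂ)
    (hA : IsDilation A Γ)
    (hc : ∀ k, k ∉ Λ → c k = 0)
    (L : ↥Γ → ↥Γ → ℂ)
    (hL : L = fun (i j : ↥Γ) => c (A.mulVec i.1 - j.1))
    (Ω : ℕ → Set ↥Γ)
    (hmono : ∀ n, Ω n ⊂ Ω (n + 1))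
    (hunion : (⋃ n, Ω n) = Set.univ)
    (hstep : ∀ n, ∀ i : ↥Γ, (∃ w ∈ Ω (n + 1), ∃ l ∈ Λ, A.mulVec i.1 = w.1 + l) → i ∈ Ω n)
    (lam : ℂ) (hlam : lam ≠ 0) (r : ℕ) :
    (∀ Y : ↥Γ → ℂ, Y ≠ 0 →
      (∀ j, ∑ᶠ i, Y i * matPow (fun i j => L i j - if i = j then lam else 0) r i j = 0) →
      ∀ n, ∃ i ∈ Ω n, Y i ≠ 0) ∧
    (∀ n, ∀ Y₁ Y₂ : ↥Γ → ℂ,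
      (∀ j, ∑ᶠ i, Y₁ i * matPow (fun i j => L i j - if i = j then lam else 0) r i j = 0) →
      (∀ j, ∑ᶠ i, Y₂ i * matPow (fun i j => L i j - if i = j then lam else 0) r i j = 0) →
      (∀ i ∈ Ω n, Y₁ i = Y₂ i) → Y₁ = Y₂) := by
  set B : Γ → Γ → ℂ := fun i j => L i j - if i = j then lam else 0
  have hLstep : ∀ m, ∀ j ∈ Ω (m + 1), ∀ i, L i j ≠ 0 → i ∈ Ω m := fun m j hj i h =>
    hstep m i ⟨j, hj, exists_mem_eq_add_of_ne_zero hc (by rwa [hL] at h)⟩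
  have hB : ∀ j, {i | B i j ≠ 0}.Finite := fun j =>
    ((refinement_column_finite hA.isUnit hc j).insert j).subset fun i hi => by
      by_cases hij : i = j
      · exact Or.inl hij
      · exact Or.inr (by simpa [B, hL, hij] using hi)
  have hoff : ∀ m, ∀ j ∈ Ω (m + 1), ∀ k ≠ j, B k j ≠ 0 → k ∈ Ω m := fun m j hj k hkj h =>
    hLstep m j hj k (by simpa [B, hkj] using h)
  have hdiag : ∀ m, ∀ j ∈ Ω (m + 1), j ∉ Ω m → B j j ≠ 0 := fun m j hj hjm => by
    have hLjj : L j j = 0 := by_contra fun h => hjm (hLstep m j hj j h)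
    simpa [B, hLjj] using hlam
  have hΩ : Monotone Ω := monotone_nat_of_le_succ fun n => (hmono n).subset
  refine ⟨fun Y hY0 hY n => ?_, fun n Y₁ Y₂ h₁ h₂ h₁₂ => ?_⟩
  · by_contra! hvan
    exact hY0 (eq_zero_of_vecMul_matPow_eq_zero hB hΩ hunion hoff hdiag hY hvan)
  · refine sub_eq_zero.1 (eq_zero_of_vecMul_matPow_eq_zero hB hΩ hunion hoff hdiag (r := r)
      (fun j => ?_) (n := n) fun i hi => sub_eq_zero.2 (h₁₂ i hi))
    rw [finsum_sub_mul (matPow_column_finite hB r j), h₁ j, h₂ j, sub_zero]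

/-- if `λ ≠ 0`, `Y ≠ 0` and `Y(L − λI)^r = 0`, then the restriction
of `Y` to each `Ω_n` is nonzero; in particular extensions of kernel vectors of
`T_n − λI` to kernel vectors of `L − λI` are unique. -/
theorem restriction_nonzero_and_unique_extension (d : ℕ) (Γ : AddSubgroup (Fin d → ℝ))
    (A : Matrix (Fin d) (Fin d) ℝ) (Λ : Finset (Fin d → ℝ)) (c : (Fin d → ℝ) → ℂ)
    (hΓ : IsLattice Γ) (hA : IsDilation A Γ)
    (hΛ : (Λ : Set (Fin d → ℝ)) ⊆ (Γ : Set (Fin d → ℝ)))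
    (hc : ∀ k, k ∉ Λ → c k = 0)
    (L : ↥Γ → ↥Γ → ℂ)
    (hL : L = fun (i j : ↥Γ) => c (A.mulVec i.1 - j.1))
    (Ω : ℕ → Set ↥Γ)
    (hadm : ∀ n, ∀ i : ↥Γ, (∃ w ∈ Ω n, ∃ l ∈ Λ, A.mulVec i.1 = w.1 + l) → i ∈ Ω n)
    (hmono : ∀ n, Ω n ⊂ Ω (n + 1))
    (hunion : (⋃ n, Ω n) = Set.univ)
    (hstep : ∀ n, ∀ i : ↥Γ, (∃ w ∈ Ω (n + 1), ∃ l ∈ Λ, A.mulVec i.1 = w.1 + l) → i ∈ Ω n)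
    (lam : ℂ) (hlam : lam ≠ 0) (r : ℕ) :
    (∀ Y : ↥Γ → ℂ, Y ≠ 0 →
      (∀ j, ∑ᶠ i, Y i * matPow (fun i j => L i j - if i = j then lam else 0) r i j = 0) →
      ∀ n, ∃ i ∈ Ω n, Y i ≠ 0) ∧
    (∀ n, ∀ Y₁ Y₂ : ↥Γ → ℂ,
      (∀ j, ∑ᶠ i, Y₁ i * matPow (fun i j => L i j - if i = j then lam else 0) r i j = 0) →
      (∀ j, ∑ᶠ i, Y₂ i * matPow (fun i j => L i j - if i = j then lam else 0) r i j = 0) →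
      (∀ i ∈ Ω n, Y₁ i = Y₂ i) → Y₁ = Y₂) :=
  restriction_nonzero_and_unique_extension_general d Γ A Λ c hA hc L hL Ω hmono hunion hstep lam
    hlam r
end

section
/- Let φ: R^d → C be a compactly supported solution of the refinement equation φ(x) = Σ_{k∈Λ} c_k φ(Ax − k) with Λ ⊆ Γ finite, and suppose the Γ-translates {φ(·−k)}_{k∈Γ} are linearly independent (i.e., Σ_k α_k φ(·−k) ≡ 0 implies α_k = 0 for all k). Then the operator Y ↦ YL on ℓ(Γ), where L_{ij} = c_{Ai−j} (zero if Ai−j ∉ Λ), is injective. -/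
open scoped BigOperators

open Function Set Matrix

/-!
Write `Φ(x) = (φ(x + k))_{k ∈ Γ}`, so that the refinement equation reads `Φ(x) = L Φ(Ax)`.
If `YL = Y'L`, then `Y Φ(x) = (YL) Φ(Ax) = (Y'L) Φ(Ax) = Y' Φ(x)` for every `x`, and linear
independence of the translates gives `Y = Y'`. The products may be reassociated because each
`Φ(x)` is finitely supported (`φ` has compact support and `Γ` is discrete) and each column of `L`
is finite (`A` is invertible, its eigenvalues having modulus `> 1`).
-/

theorem IsLattice.finite_preimage_coe {d : ℕ} {Γ : AddSubgroup (Fin d → ℝ)} (hΓ : IsLattice Γ)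
    {K : Set (Fin d → ℝ)} (hK : Bornology.IsBounded K) : ((↑) ⁻¹' K : Set Γ).Finite := by
  obtain ⟨B, rfl⟩ := hΓ
  refine ((ZSpan.setFinite_inter B hK).preimage Subtype.val_injective.injOn).subset
    fun γ hγ => ⟨hγ, ?_⟩
  rw [← AddSubgroup.toIntSubmodule_closure]
  exact γ.2

theorem IsLattice.hasFiniteSupport_translate {d : ℕ} {Γ : AddSubgroup (Fin d → ℝ)}
    (hΓ : IsLattice Γ) {M : Type*} [Zero M] {φ : (Fin d → ℝ) → M} (hφ : HasCompactSupport φ)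
    (x : Fin d → ℝ) : HasFiniteSupport fun k : Γ => φ (x + k) := by
  refine (hΓ.finite_preimage_coe (hφ.isCompact.image (continuous_sub_right x)).isBounded).subset
    fun k hk => ⟨x + k, subset_tsupport φ hk, add_sub_cancel_left x k⟩

theorem IsDilation.mulVec_injective {d : ℕ} {A : Matrix (Fin d) (Fin d) ℝ}
    {Γ : AddSubgroup (Fin d → ℝ)} (hA : IsDilation A Γ) : Injective A.mulVec := by
  rw [mulVec_injective_iff_isUnit, isUnit_iff_isUnit_det]
  by_contra hdet
  have h0 : (0 : ℂ) ∈ spectrum ℂ (A.map (Complex.ofReal ·)) := by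
    rw [spectrum.zero_mem_iff, isUnit_iff_isUnit_det,
      show A.map (Complex.ofReal ·) = Complex.ofRealHom.mapMatrix A from rfl, ← RingHom.map_det]
    simpa [isUnit_iff_ne_zero] using hdet
  exact absurd (hA.2 0 h0) (by norm_num)

theorem translate_eq_finsum_of_refinement {d : ℕ} {Γ : AddSubgroup (Fin d → ℝ)}
    {A : Matrix (Fin d) (Fin d) ℝ} {Λ : Finset (Fin d → ℝ)} {R : Type*} [CommSemiring R]
    {c φ : (Fin d → ℝ) → R} (hAΓ : ∀ x ∈ Γ, A *ᵥ x ∈ Γ) (hΛ : (Λ : Set (Fin d → ℝ)) ⊆ Γ)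
    (hc : ∀ k, k ∉ Λ → c k = 0) (href : ∀ x, φ x = ∑ k ∈ Λ, c k * φ (A *ᵥ x - k))
    (x : Fin d → ℝ) (i : Γ) :
    φ (x + i) = ∑ᶠ j : Γ, c (A *ᵥ i - j) * φ (A *ᵥ x + j) := by
  set g : (Fin d → ℝ) → R := fun k => c k * φ (A *ᵥ x + A *ᵥ i - k)
  have hrange : (Λ : Set (Fin d → ℝ)) ⊆ range fun j : Γ => A *ᵥ i - j := fun k hk =>
    ⟨⟨A *ᵥ i - k, sub_mem (hAΓ _ i.2) (hΛ hk)⟩, sub_sub_cancel _ _⟩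
  have hsupp : (range fun j : Γ => A *ᵥ i - j) ∩ support g ⊆ Λ := fun k hk => by
    by_contra hkΛ
    exact hk.2 (by simp [g, hc k hkΛ])
  calc φ (x + i) = ∑ k ∈ Λ, g k := by rw [href, mulVec_add]
    _ = ∑ᶠ k ∈ range fun j : Γ => A *ᵥ i - j, g k :=
      (finsum_mem_eq_sum_of_subset g hsupp hrange).symm
    _ = ∑ᶠ j : Γ, c (A *ᵥ i - j) * φ (A *ᵥ x + j) := by
      rw [finsum_mem_range (g := fun j : Γ => A *ᵥ i - j)
        (sub_right_injective.comp Subtype.val_injective)]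
      simp [g, add_sub_assoc]

theorem finsum_mul_finsum_assoc {ι κ R : Type*} [CommSemiring R] (Y : ι → R) (L : ι → κ → R)
    (v : κ → R) (hv : HasFiniteSupport v) (hL : ∀ j, HasFiniteSupport fun i => L i j) :
    ∑ᶠ i, Y i * ∑ᶠ j, L i j * v j = ∑ᶠ j, (∑ᶠ i, Y i * L i j) * v j := by
  classical
  set J := hv.toFinset
  set I := J.biUnion fun j => (hL j).toFinset
  have hcol : ∀ j ∈ J, (support fun i => L i j) ⊆ I := fun j hj i hi =>
    Finset.mem_biUnion.2 ⟨j, hj, (hL j).mem_toFinset.2 hi⟩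
  have hrow : ∀ i, ∑ᶠ j, L i j * v j = ∑ j ∈ J, L i j * v j := fun i =>
    finsum_eq_sum_of_support_subset _ ((support_mul_subset_right _ _).trans hv.coe_toFinset.ge)
  have hLHS : (support fun i => Y i * ∑ j ∈ J, L i j * v j) ⊆ I := fun i hi => by
    obtain ⟨j, hj, hLv⟩ := Finset.exists_ne_zero_of_sum_ne_zero (right_ne_zero_of_mul hi)
    exact hcol j hj (left_ne_zero_of_mul hLv)
  calc ∑ᶠ i, Y i * ∑ᶠ j, L i j * v j = ∑ i ∈ I, Y i * ∑ j ∈ J, L i j * v j := by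
        simp only [hrow]; exact finsum_eq_sum_of_support_subset _ hLHS
    _ = ∑ j ∈ J, (∑ i ∈ I, Y i * L i j) * v j := by
        simp only [Finset.mul_sum, Finset.sum_mul, mul_assoc]; exact Finset.sum_comm
    _ = ∑ j ∈ J, (∑ᶠ i, Y i * L i j) * v j := Finset.sum_congr rfl fun j hj => by
        rw [finsum_eq_sum_of_support_subset _ ((support_mul_subset_right _ _).trans (hcol j hj))]
    _ = ∑ᶠ j, (∑ᶠ i, Y i * L i j) * v j :=
        (finsum_eq_sum_of_support_subset _
          ((support_mul_subset_right _ _).trans hv.coe_toFinset.ge)).symm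

theorem eq_of_finsum_translate_eq {G R : Type*} [AddCommGroup G] [CommRing R] {Γ : AddSubgroup G}
    {φ : G → R} (hind : ∀ α : Γ → R, (∀ x, ∑ᶠ k : Γ, α k * φ (x - k) = 0) → α = 0)
    (htr : ∀ x, HasFiniteSupport fun k : Γ => φ (x + k)) {Y Y' : Γ → R}
    (h : ∀ x, ∑ᶠ i, Y i * φ (x + i) = ∑ᶠ i, Y' i * φ (x + i)) : Y = Y' := by
  have hα := hind (fun k => (Y - Y') (-k)) fun x => by
    rw [← finsum_comp_equiv (Equiv.neg Γ)]
    simp only [Equiv.neg_apply, neg_neg, AddSubgroup.coe_neg, sub_neg_eq_add, Pi.sub_apply,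
      sub_mul]
    rw [finsum_sub_distrib (f := fun i => Y i * φ (x + i)) (g := fun i => Y' i * φ (x + i))
      ((htr x).mul_right Y) ((htr x).mul_right Y'), h x, sub_self]
  funext i
  simpa [sub_eq_zero] using congrFun hα (-i)

/-- if the `Γ`-translates of a compactly supported refinable `φ`
are linearly independent, then `Y ↦ YL` is injective on `ℓ(Γ)`. -/
theorem rowMul_injective (d : ℕ) (Γ : AddSubgroup (Fin d → ℝ))
    (A : Matrix (Fin d) (Fin d) ℝ) (Λ : Finset (Fin d → ℝ)) (c : (Fin d → ℝ) → ℂ)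
    (φ : (Fin d → ℝ) → ℂ)
    (hΓ : IsLattice Γ) (hA : IsDilation A Γ)
    (hΛ : (Λ : Set (Fin d → ℝ)) ⊆ (Γ : Set (Fin d → ℝ)))
    (hc : ∀ k, k ∉ Λ → c k = 0)
    (hsupp : HasCompactSupport φ)
    (href : ∀ x, φ x = ∑ k ∈ Λ, c k * φ (A.mulVec x - k))
    (hind : ∀ α : ↥Γ → ℂ, (∀ x, ∑ᶠ k : ↥Γ, α k * φ (x - k.1) = 0) → α = 0)
    (L : ↥Γ → ↥Γ → ℂ)
    (hL : L = fun (i j : ↥Γ) => c (A.mulVec i.1 - j.1)) :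
    Function.Injective (fun Y : ↥Γ → ℂ => fun j => ∑ᶠ i, Y i * L i j) := by
  have htr := hΓ.hasFiniteSupport_translate hsupp
  have hrefL (x : Fin d → ℝ) (i : Γ) : φ (x + i) = ∑ᶠ j, L i j * φ (A *ᵥ x + j) :=
    hL ▸ translate_eq_finsum_of_refinement hA.1 hΛ hc href x i
  have hcol (j : Γ) : HasFiniteSupport fun i => L i j := by
    subst hL
    exact HasFiniteSupport.comp_of_injective
      (sub_left_injective.comp (hA.mulVec_injective.comp Subtype.val_injective))
      (Λ.finite_toSet.subset (support_subset_iff'.2 hc))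
  have hsyn (Y : Γ → ℂ) (x : Fin d → ℝ) :
      ∑ᶠ i, Y i * φ (x + i) = ∑ᶠ j, (∑ᶠ i, Y i * L i j) * φ (A *ᵥ x + j) := by
    simp only [hrefL x]
    exact finsum_mul_finsum_assoc _ _ _ (htr _) hcol
  intro Y Y' hYL
  exact eq_of_finsum_translate_eq hind htr fun x => by
    rw [hsyn Y x, hsyn Y' x]
    exact congrArg (fun YL : Γ → ℂ => ∑ᶠ j, YL j * φ (A *ᵥ x + j)) hYL
end
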